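/- arXiv:1312.2056 — 3 statements merged into one kernel-verified Lean document; each statement's English description precedes it below -/
import Mathlib

section
/- If (X,T) is an M-system, then the set of minimal points of the induced system (M(X), T_M) is dense in M(X). -/
/-!
For a countable probability space `(ι, P)`, the map `v ↦ law P v` from `ι → X` to `M(X)` is
continuous and intertwines the coordinatewise action of `T` with `T_M`, so it sends minimal points
to minimal points. Minimal points of `ι → X` are dense: transitivity yields one open set whose
iterates `T^[k i]` land in every factor of a given box, and a minimal point `x` of that open set
gives the minimal point `(T^[k i] x)ᵢ` in the box. Hence every law of a finitely valued random
variable is a limit of minimal points of `T_M`, and these laws are dense in `M(X)`: `μ` is the weak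
limit of `μ.map φₙ` for simple functions `φₙ` converging pointwise to the identity.
-/

open MeasureTheory Topology Set Function TopologicalSpace

noncomputable section

namespace Paper

/-- The orbit closure of a point. -/
def orbitClosure {α : Type*} [TopologicalSpace α] (T : α → α) (x : α) : Set α :=
  closure (Set.range fun n : ℕ => T^[n] x)

/-- Topological transitivity: `N(U,V)` is infinite for all non-empty open `U, V`. -/
def IsTransitive {α : Type*} [TopologicalSpace α] (T : α → α) : Prop :=
  ∀ U V : Set α, IsOpen U → U.Nonempty → IsOpen V → V.Nonempty →
    {n : ℕ | (U ∩ T^[n] ⁻¹' V).Nonempty}.Infinite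

/-- Weak mixing: the product system is transitive. -/
def IsWeaklyMixing {α : Type*} [TopologicalSpace α] (T : α → α) : Prop :=
  IsTransitive (Prod.map T T)

/-- Total transitivity. -/
def IsTotallyTransitive {α : Type*} [TopologicalSpace α] (T : α → α) : Prop :=
  ∀ n : ℕ, 0 < n → IsTransitive (T^[n])

/-- A minimal point: its orbit closure is a minimal subsystem. -/
def IsMinimalPoint {α : Type*} [TopologicalSpace α] (T : α → α) (x : α) : Prop :=
  ∀ Y : Set α, Y.Nonempty → IsClosed Y → MapsTo T Y Y → Y ⊆ orbitClosure T x →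
    Y = orbitClosure T x

def IsPeriodicPoint {α : Type*} (T : α → α) (x : α) : Prop :=
  ∃ n : ℕ, 0 < n ∧ T^[n] x = x

def IsPeriodicSystem {α : Type*} (T : α → α) : Prop :=
  ∃ m : ℕ, 0 < m ∧ T^[m] = id

def IsPointwisePeriodic {α : Type*} (T : α → α) : Prop :=
  ∀ x : α, IsPeriodicPoint T x

def IsMSystem {α : Type*} [TopologicalSpace α] (T : α → α) : Prop :=
  IsTransitive T ∧ Dense {x : α | IsMinimalPoint T x}

def IsPSystem {α : Type*} [TopologicalSpace α] (T : α → α) : Prop :=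
  IsTransitive T ∧ Dense {x : α | IsPeriodicPoint T x}

/-- An E-system: transitive with an invariant (Borel) probability measure of full support. -/
def IsESystem {α : Type*} [TopologicalSpace α] (T : α → α) : Prop :=
  IsTransitive T ∧
    let _i : MeasurableSpace α := borel α
    ∃ μ : Measure α, IsProbabilityMeasure μ ∧ μ.map T = μ ∧
      ∀ U : Set α, IsOpen U → U.Nonempty → 0 < μ U

/-- A proximal pair: the orbit closure of `(x, y)` meets the diagonal. -/
def IsProximalPair {α : Type*} [TopologicalSpace α] (T : α → α) (x y : α) : Prop :=
  ∃ z : α, (z, z) ∈ closure (Set.range fun n : ℕ => (T^[n] x, T^[n] y))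

def IsDistalPoint {α : Type*} [TopologicalSpace α] (T : α → α) (x : α) : Prop :=
  ∀ y ∈ orbitClosure T x, IsProximalPair T x y → y = x

def IsDistalSystem {α : Type*} [TopologicalSpace α] (T : α → α) : Prop :=
  ∀ x y : α, IsProximalPair T x y → x = y

/-- The induced map on the hyperspace of non-empty compact (= closed) subsets. -/
def TK {α : Type*} [TopologicalSpace α] (T : α → α) (hT : Continuous T)
    (C : NonemptyCompacts α) : NonemptyCompacts α :=
  ⟨⟨T '' (C : Set α), C.isCompact.image hT⟩, C.nonempty.image T⟩

/-- The induced map on the space of Borel probability measures. -/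
def TM {α : Type*} [TopologicalSpace α] [MeasurableSpace α] [BorelSpace α] (T : α → α)
    (hT : Continuous T) (μ : ProbabilityMeasure α) : ProbabilityMeasure α :=
  μ.map hT.measurable.aemeasurable

/-- Almost dense periodic sets. -/
def AlmostDensePeriodicSets {α : Type*} [TopologicalSpace α] (T : α → α) : Prop :=
  let _i : MeasurableSpace α := borel α
  ∀ U : Set α, IsOpen U → U.Nonempty → ∀ ε : ℝ, 0 < ε →
    ∃ k : ℕ, 0 < k ∧ ∃ μ : Measure α, IsProbabilityMeasure μ ∧ μ.map (T^[k]) = μ ∧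
      μ Uᶜ < ENNReal.ofReal ε

def IsAlmostHYSystem {α : Type*} [TopologicalSpace α] (T : α → α) : Prop :=
  IsTotallyTransitive T ∧ AlmostDensePeriodicSets T

def IsFactorMap {α β : Type*} [TopologicalSpace α] [TopologicalSpace β]
    (T : α → α) (S : β → β) (π : α → β) : Prop :=
  Continuous π ∧ Surjective π ∧ π ∘ T = S ∘ π

def IsJoining {α β : Type*} [TopologicalSpace α] [TopologicalSpace β]
    (T : α → α) (S : β → β) (J : Set (α × β)) : Prop :=
  J.Nonempty ∧ IsClosed J ∧ MapsTo (Prod.map T S) J J ∧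
    Prod.fst '' J = Set.univ ∧ Prod.snd '' J = Set.univ

def AreDisjoint {α β : Type*} [TopologicalSpace α] [TopologicalSpace β]
    (T : α → α) (S : β → β) : Prop :=
  ∀ J : Set (α × β), IsJoining T S J → J = Set.univ

def IsMinimalSystem {β : Type*} [TopologicalSpace β] (S : β → β) : Prop :=
  ∀ Y : Set β, Y.Nonempty → IsClosed Y → MapsTo S Y Y → Y = Set.univ

/-- Disjoint from every minimal system (on a compact metric space). -/
def DisjointFromAllMinimal {α : Type*} [TopologicalSpace α] (T : α → α) : Prop :=
  ∀ (β : Type) (_ : MetricSpace β) (_ : CompactSpace β) (S : β → β),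
    Continuous S → Surjective S → IsMinimalSystem S → AreDisjoint T S

section OrbitClosure

variable {α β : Type*} [TopologicalSpace α] [TopologicalSpace β]

lemma mapsTo_orbitClosure {T : α → α} (hT : Continuous T) (x : α) :
    MapsTo T (orbitClosure T x) (orbitClosure T x) := by
  refine MapsTo.closure ?_ hT
  rintro _ ⟨n, rfl⟩
  exact ⟨n + 1, iterate_succ_apply' T n x⟩

lemma image_orbitClosure [CompactSpace α] [T2Space β] {T : α → α}
    {S : β → β} {π : α → β} (h : Semiconj π T S) (hπ : Continuous π) (x : α) :
    π '' orbitClosure T x = orbitClosure S (π x) := by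
  have hrange : π '' range (fun n : ℕ => T^[n] x) = range fun n : ℕ => S^[n] (π x) := by
    rw [← range_comp]
    exact congrArg range (funext fun n => (h.iterate_right n) x)
  rw [orbitClosure, image_closure_of_isCompact isClosed_closure.isCompact hπ.continuousOn,
    hrange, orbitClosure]

lemma IsMinimalPoint.image [CompactSpace α] [T2Space β] {T : α → α} {S : β → β} {π : α → β}
    {x : α} (hx : IsMinimalPoint T x) (hT : Continuous T) (hπ : Continuous π)
    (h : Semiconj π T S) : IsMinimalPoint S (π x) := by
  intro Y ⟨y, hy⟩ hYc hYS hYsub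
  rw [← image_orbitClosure h hπ] at hYsub ⊢
  obtain ⟨z, hz, rfl⟩ := hYsub hy
  have hpre : π ⁻¹' Y ∩ orbitClosure T x = orbitClosure T x :=
    hx _ ⟨z, hy, hz⟩ ((hYc.preimage hπ).inter isClosed_closure)
      (fun w hw => ⟨show π (T w) ∈ Y from h w ▸ hYS hw.1, mapsTo_orbitClosure hT x hw.2⟩)
      inter_subset_right
  refine hYsub.antisymm ?_
  rintro _ ⟨w, hw, rfl⟩
  rw [← hpre] at hw
  exact hw.1

end OrbitClosure

section Transitive

variable {X : Type*} [TopologicalSpace X] {T : X → X}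

lemma IsTransitive.exists_isOpen_mapsTo_iterate [Nonempty X] (htr : IsTransitive T)
    (hT : Continuous T) {ι : Type*} (s : Finset ι) {U : ι → Set X}
    (hU : ∀ i ∈ s, IsOpen (U i) ∧ (U i).Nonempty) :
    ∃ W : Set X, IsOpen W ∧ W.Nonempty ∧ ∃ k : ι → ℕ, ∀ i ∈ s, MapsTo T^[k i] W (U i) := by
  classical
  induction s using Finset.cons_induction with
  | empty => exact ⟨univ, isOpen_univ, univ_nonempty, 0, by simp⟩
  | cons a s ha ih =>
    simp only [Finset.mem_cons, forall_eq_or_imp] at hU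
    obtain ⟨W, hWo, hWne, k, hk⟩ := ih hU.2
    obtain ⟨m, hm⟩ := (htr W (U a) hWo hWne hU.1.1 hU.1.2).nonempty
    refine ⟨W ∩ T^[m] ⁻¹' U a, hWo.inter (hU.1.1.preimage (hT.iterate m)), hm,
      update k a m, ?_⟩
    simp only [Finset.mem_cons, forall_eq_or_imp, update_self]
    refine ⟨fun y hy => hy.2, fun i hi => ?_⟩
    rw [update_of_ne (ne_of_mem_of_not_mem hi ha)]
    exact (hk i hi).mono_left inter_subset_left

lemma IsMSystem.dense_minimalPoints_pi [CompactSpace X] [T2Space X] [Nonempty X]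
    (h : IsMSystem T) (hT : Continuous T) (ι : Type*) :
    Dense {v : ι → X | IsMinimalPoint (T ∘ ·) v} := by
  refine dense_iff_inter_open.2 fun W hWo ⟨w, hw⟩ => ?_
  obtain ⟨I, u, hu, hIu⟩ := isOpen_pi_iff.1 hWo w hw
  obtain ⟨V, hVo, hVne, k, hk⟩ :=
    h.1.exists_isOpen_mapsTo_iterate hT I fun i hi => ⟨(hu i hi).1, w i, (hu i hi).2⟩
  obtain ⟨x, hxV, hx⟩ := h.2.inter_open_nonempty V hVo hVne
  refine ⟨fun i => T^[k i] x, hIu fun i hi => hk i hi hxV,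
    hx.image (π := fun y i => T^[k i] y) hT ?_ ?_⟩
  · exact continuous_pi fun i => hT.iterate (k i)
  · exact fun y => funext fun i => Commute.iterate_self T (k i) y

end Transitive

open Filter

section Law

variable {X : Type*} [TopologicalSpace X] [MeasurableSpace X] {ι : Type*} [MeasurableSpace ι]
  [Countable ι] [MeasurableSingletonClass ι]

/-- `∑ i, P {i} • δ (v i)`; for uniform `P` on `Fin n` these are the measures of the paper's
`Mₙ(X)`. -/
def law (P : ProbabilityMeasure ι) (v : ι → X) : ProbabilityMeasure X :=
  P.map (measurable_of_countable v).aemeasurable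

lemma continuous_law [OpensMeasurableSpace X] [FirstCountableTopology X]
    (P : ProbabilityMeasure ι) : Continuous (law (X := X) P) :=
  continuous_iff_continuousAt.2 fun v =>
    (tendstoInDistribution_of_ae_tendsto (X := fun u : ι → X => u)
      (fun u => (measurable_of_countable u).aemeasurable)
      (measurable_of_countable v).aemeasurable
      (.of_forall fun i => (continuous_apply i).tendsto v)).tendsto

lemma TM_law [BorelSpace X] {T : X → X} (hT : Continuous T) (P : ProbabilityMeasure ι)
    (v : ι → X) : TM T hT (law P v) = law P (T ∘ v) :=
  Subtype.ext (Measure.map_map hT.measurable (measurable_of_countable v))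

end Law

lemma IsMSystem.law_mem_closure_minimalPoints {X : Type*} [MetricSpace X] [CompactSpace X]
    [MeasurableSpace X] [BorelSpace X] {T : X → X} (hT : Continuous T)
    (h : IsMSystem T) {ι : Type*} [MeasurableSpace ι] [Countable ι] [MeasurableSingletonClass ι]
    (P : ProbabilityMeasure ι) (v : ι → X) :
    law P v ∈ closure {μ : ProbabilityMeasure X | IsMinimalPoint (TM T hT) μ} := by
  have : Nonempty X := P.nonempty.map v
  refine closure_mono ?_ <| image_closure_subset_closure_image (continuous_law P)
    ⟨v, (h.dense_minimalPoints_pi hT ι) v, rfl⟩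
  rintro _ ⟨u, hu, rfl⟩
  exact hu.image (continuous_pi fun i => hT.comp (continuous_apply i)) (continuous_law P)
    fun w => (TM_law hT P w).symm

lemma ProbabilityMeasure.exists_simpleFunc_tendsto_map {X : Type*} [PseudoEMetricSpace X]
    [SeparableSpace X] [MeasurableSpace X] [OpensMeasurableSpace X] (μ : ProbabilityMeasure X) :
    ∃ φ : ℕ → SimpleFunc X X,
      Tendsto (fun n => μ.map (φ n).measurable.aemeasurable) atTop (𝓝 μ) := by
  obtain ⟨x₀⟩ := μ.nonempty
  let φ := SimpleFunc.approxOn id measurable_id univ x₀ (mem_univ x₀)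
  refine ⟨φ, ?_⟩
  have := (tendstoInDistribution_of_ae_tendsto (μ' := (μ : Measure X))
    (fun n => (φ n).measurable.aemeasurable) aemeasurable_id
    (.of_forall fun x => SimpleFunc.tendsto_approxOn measurable_id (mem_univ x₀)
      (subset_closure (mem_univ x)))).tendsto
  simp only [Measure.map_id] at this
  exact this

lemma IsMSystem.map_simpleFunc_mem_closure_minimalPoints {X : Type*} [MetricSpace X]
    [CompactSpace X] [MeasurableSpace X] [BorelSpace X] {T : X → X} (hT : Continuous T)
    (h : IsMSystem T) (μ : ProbabilityMeasure X) (φ : SimpleFunc X X) :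
    μ.map φ.measurable.aemeasurable ∈
      closure {μ : ProbabilityMeasure X | IsMinimalPoint (TM T hT) μ} := by
  have := φ.finite_range.to_subtype
  have hφ : Measurable (rangeFactorization φ) := φ.measurable.subtype_mk
  have : μ.map φ.measurable.aemeasurable = law (μ.map hφ.aemeasurable) Subtype.val :=
    Subtype.ext (Measure.map_map measurable_subtype_coe hφ).symm
  exact this ▸ h.law_mem_closure_minimalPoints hT _ _

theorem Msystem_implies_dense_minimal_points_on_measures_general {X : Type*}
    [MetricSpace X] [CompactSpace X] [MeasurableSpace X] [BorelSpace X]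
    (T : X → X) (hT : Continuous T)
    (h : IsMSystem T) :
    Dense {μ : ProbabilityMeasure X | IsMinimalPoint (TM T hT) μ} := by
  intro μ
  obtain ⟨φ, hφ⟩ := ProbabilityMeasure.exists_simpleFunc_tendsto_map μ
  exact isClosed_closure.mem_of_tendsto hφ
    (.of_forall fun n => h.map_simpleFunc_mem_closure_minimalPoints hT μ (φ n))

theorem Msystem_implies_dense_minimal_points_on_measures {X : Type*}
    [MetricSpace X] [CompactSpace X] [MeasurableSpace X] [BorelSpace X]
    (T : X → X) (hT : Continuous T) (hTs : Surjective T)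
    (h : IsMSystem T) :
    Dense {μ : ProbabilityMeasure X | IsMinimalPoint (TM T hT) μ} :=
  Msystem_implies_dense_minimal_points_on_measures_general T hT h

end Paper
end
end

section
/- If (X,T) is totally transitive and has almost dense periodic sets, then (X,T) is weakly mixing. -/
open MeasureTheory Topology Set Function TopologicalSpace

noncomputable section

namespace Paper

/-!
Given non-empty open `U₁, U₂, V₁, V₂`, transitivity gives `n` with `B = U₁ ∩ T⁻ⁿ V₁ ≠ ∅`.
Almost dense periodic sets give `k > 0` and a `T^k`-invariant probability measure putting mass
more than `1/2` on `B`, so `B` meets `T^{-kj} B` for every `j`; hence `n + kj ∈ N(U₁, V₁)` for all `j`.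
Transitivity of `T^k` on `U₂` and `T⁻ⁿ V₂` gives infinitely many `j` with `n + kj ∈ N(U₂, V₂)`, and
these times lie in `N(U₁ × U₂, V₁ × V₂)`.
-/

/-- `N(U, V)` in the notation of topological dynamics. -/
def hittingTimes {α : Type*} (T : α → α) (U V : Set α) : Set ℕ :=
  {n : ℕ | (U ∩ T^[n] ⁻¹' V).Nonempty}

section HittingTimes

variable {α β : Type*}

theorem hittingTimes_mono {T : α → α} {U U' V V' : Set α} (hU : U ⊆ U') (hV : V ⊆ V') :
    hittingTimes T U V ⊆ hittingTimes T U' V' :=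
  fun _ ⟨x, hxU, hxV⟩ => ⟨x, hU hxU, hV hxV⟩

theorem hittingTimes_prodMap (T : α → α) (S : β → β) (U₁ V₁ : Set α) (U₂ V₂ : Set β) :
    hittingTimes (Prod.map T S) (U₁ ×ˢ U₂) (V₁ ×ˢ V₂) =
      hittingTimes T U₁ V₁ ∩ hittingTimes S U₂ V₂ := by
  ext n
  simp only [hittingTimes, Prod.map_iterate, preimage_prod_map_prod, prod_inter_prod,
    prod_nonempty_iff, mem_inter_iff, mem_ofPred_eq]

theorem mem_hittingTimes_iterate_iff (T : α → α) (U V : Set α) (n k j : ℕ) :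
    j ∈ hittingTimes T^[k] U (T^[n] ⁻¹' V) ↔ n + k * j ∈ hittingTimes T U V := by
  simp only [hittingTimes, mem_ofPred_eq, ← preimage_comp, ← iterate_mul, ← iterate_add]

end HittingTimes

theorem _root_.MeasureTheory.MeasurePreserving.inter_preimage_iterate_nonempty {α : Type*}
    [MeasurableSpace α] {f : α → α} {μ : Measure α} (hf : MeasurePreserving f μ μ) {s : Set α}
    (hs : NullMeasurableSet s μ) (hμs : μ sᶜ < μ s) (j : ℕ) : (s ∩ f^[j] ⁻¹' s).Nonempty := by
  by_contra h
  have hsub : f^[j] ⁻¹' s ⊆ sᶜ := fun x hx hxs => h ⟨x, hxs, hx⟩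
  exact (measure_mono hsub).not_gt ((hf.iterate j).measure_preimage hs ▸ hμs)

section Transitivity

variable {α : Type*} [TopologicalSpace α] {T : α → α}

theorem IsTotallyTransitive.isTransitive (h : IsTotallyTransitive T) : IsTransitive T := by
  simpa using h 1 one_pos

theorem IsTransitive.preimage_iterate_nonempty (h : IsTransitive T) {V : Set α} (hV : IsOpen V)
    (hVne : V.Nonempty) (n : ℕ) : (T^[n] ⁻¹' V).Nonempty := by
  obtain ⟨m, ⟨x, -, hx⟩, hnm⟩ :=
    (h univ V isOpen_univ (hVne.mono (subset_univ V)) hV hVne).exists_gt n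
  refine ⟨T^[m - n] x, ?_⟩
  rwa [mem_preimage, ← iterate_add_apply, Nat.add_sub_cancel' hnm.le]

theorem isWeaklyMixing_of_hittingTimes_inter_infinite
    (h : ∀ U₁ V₁ U₂ V₂ : Set α, IsOpen U₁ → U₁.Nonempty → IsOpen V₁ → V₁.Nonempty →
      IsOpen U₂ → U₂.Nonempty → IsOpen V₂ → V₂.Nonempty →
      (hittingTimes T U₁ V₁ ∩ hittingTimes T U₂ V₂).Infinite) :
    IsWeaklyMixing T := by
  intro U V hU ⟨⟨u₁, u₂⟩, hu⟩ hV ⟨⟨v₁, v₂⟩, hv⟩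
  obtain ⟨U₁, U₂, hU₁, hU₂, hu₁, hu₂, hUsub⟩ := isOpen_prod_iff.mp hU u₁ u₂ hu
  obtain ⟨V₁, V₂, hV₁, hV₂, hv₁, hv₂, hVsub⟩ := isOpen_prod_iff.mp hV v₁ v₂ hv
  have := h U₁ V₁ U₂ V₂ hU₁ ⟨u₁, hu₁⟩ hV₁ ⟨v₁, hv₁⟩ hU₂ ⟨u₂, hu₂⟩ hV₂ ⟨v₂, hv₂⟩
  rw [← hittingTimes_prodMap] at this
  exact this.mono (hittingTimes_mono hUsub hVsub)

theorem AlmostDensePeriodicSets.exists_hittingTimes_iterate_eq_univ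
    (h : AlmostDensePeriodicSets T) (hT : Continuous T) {U : Set α} (hU : IsOpen U)
    (hUne : U.Nonempty) : ∃ k, 0 < k ∧ hittingTimes T^[k] U U = univ := by
  let : MeasurableSpace α := borel α
  have : BorelSpace α := ⟨rfl⟩
  obtain ⟨k, hk, μ, hμ, hμk, hμU⟩ := h U hU hUne (1 / 2) one_half_pos
  have hUc : μ Uᶜ < μ U := by
    by_contra! hle
    have hhalf : ENNReal.ofReal (1 / 2) + ENNReal.ofReal (1 / 2) = 1 := by
      rw [← ENNReal.ofReal_add (by norm_num) (by norm_num)]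
      norm_num
    refine lt_irrefl (1 : ENNReal) ?_
    calc 1 = μ U + μ Uᶜ := by rw [measure_add_measure_compl hU.measurableSet, measure_univ]
      _ ≤ μ Uᶜ + μ Uᶜ := by gcongr
      _ < ENNReal.ofReal (1 / 2) + ENNReal.ofReal (1 / 2) := ENNReal.add_lt_add hμU hμU
      _ = 1 := hhalf
  exact ⟨k, hk, eq_univ_of_forall <|
    (MeasurePreserving.mk (hT.iterate k).measurable hμk).inter_preimage_iterate_nonempty
      hU.measurableSet.nullMeasurableSet hUc⟩

end Transitivity

theorem totally_transitive_almost_dense_periodic_implies_wm_general {X : Type*}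
    [MetricSpace X]
    (T : X → X) (hT : Continuous T)
    (htt : IsTotallyTransitive T) (hadps : AlmostDensePeriodicSets T) :
    IsWeaklyMixing T := by
  refine isWeaklyMixing_of_hittingTimes_inter_infinite
    fun U₁ V₁ U₂ V₂ hU₁ hU₁ne hV₁ hV₁ne hU₂ hU₂ne hV₂ hV₂ne => ?_
  obtain ⟨n, hn⟩ := (htt.isTransitive U₁ V₁ hU₁ hU₁ne hV₁ hV₁ne).nonempty
  obtain ⟨k, hk, hrec⟩ := hadps.exists_hittingTimes_iterate_eq_univ hT
    (hU₁.inter (hV₁.preimage (hT.iterate n))) hn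
  have hN₁ (j : ℕ) : n + k * j ∈ hittingTimes T U₁ V₁ :=
    (mem_hittingTimes_iterate_iff T U₁ V₁ n k j).1 <|
      hittingTimes_mono inter_subset_left inter_subset_right (hrec ▸ mem_univ j)
  have hN₂ : (hittingTimes T^[k] U₂ (T^[n] ⁻¹' V₂)).Infinite :=
    htt k hk U₂ _ hU₂ hU₂ne (hV₂.preimage (hT.iterate n))
      (htt.isTransitive.preimage_iterate_nonempty hV₂ hV₂ne n)
  refine (hN₂.image ((add_right_injective n).comp (mul_right_injective₀ hk.ne')).injOn).mono ?_
  rintro _ ⟨j, hj, rfl⟩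
  exact ⟨hN₁ j, (mem_hittingTimes_iterate_iff T U₂ V₂ n k j).1 hj⟩

theorem totally_transitive_almost_dense_periodic_implies_wm {X : Type*}
    [MetricSpace X] [CompactSpace X]
    (T : X → X) (hT : Continuous T) (hTs : Surjective T)
    (htt : IsTotallyTransitive T) (hadps : AlmostDensePeriodicSets T) :
    IsWeaklyMixing T :=
  totally_transitive_almost_dense_periodic_implies_wm_general T hT htt hadps

end Paper
end
end

section
/- If the induced hyperspace system (K(X), T_K) is weakly mixing and disjoint from all minimal systems, then (X,T) is weakly mixing and disjoint from all minimal systems. Conversely, if (Xⁿ, T⁽ⁿ⁾) is disjoint from all minimal systems for every n ∈ ℕ, then both (K(X), T_K) and (M(X), T_M) are disjoint from all minimal systems. -/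
open MeasureTheory Topology Set Function TopologicalSpace

noncomputable section

namespace Paper

/-!
Sending `x` to `{x}` embeds `(X, T)` into `(K(X), T_K)`, and the open sets `{K | K ⊆ U}` of `K(X)`
carry transitivity of `T_K × T_K` down to `T × T`. A joining `J` of `X` and `Y` lifts to the joining
`{(K, y) | ∃ x ∈ K, (x, y) ∈ J}` of `K(X)` and `Y`; if that is everything, so is `J`.

Conversely, finite sets and empirical measures are equivariant maps `Xⁿ → K(X)` and `Xⁿ → M(X)`
whose images have dense union (for `M(X)` by the strong law of large numbers applied to an i.i.d.
sample). A joining of `K(X)` or `M(X)` with a minimal `Y` pulls back to a joining of `Xⁿ` and `Y`,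
which is all of `Xⁿ × Y`; so the joining contains the union of the images times `Y`, a dense set,
and being closed it is everything.
-/

section Joinings

variable {α β γ : Type*} [TopologicalSpace α] [TopologicalSpace β] [TopologicalSpace γ]
  {Tα : α → α} {S : β → β} {R : γ → γ}

/-- The pull-back of `J` along `π × id` is a joining of `Tα` and `S`: its second projection is
closed and `S`-invariant, hence all of `β` by minimality. -/
theorem AreDisjoint.range_prod_univ_subset [CompactSpace α] (hd : AreDisjoint Tα S)
    (hS : IsMinimalSystem S) {π : α → γ} (hπ : Continuous π) (hπR : Semiconj π Tα R)
    {J : Set (γ × β)} (hJ : IsClosed J) (hJR : MapsTo (Prod.map R S) J J)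
    (hJ₁ : Prod.fst '' J = univ) : range π ×ˢ univ ⊆ J := by
  rintro ⟨-, y⟩ ⟨⟨x, rfl⟩, -⟩
  set J' : Set (α × β) := Prod.map π id ⁻¹' J
  have hJ'closed : IsClosed J' := hJ.preimage (hπ.prodMap continuous_id)
  have hJ'maps : MapsTo (Prod.map Tα S) J' J' := fun p hp => by
    show (π (Tα p.1), S p.2) ∈ J
    exact hπR.eq p.1 ▸ hJR hp
  have hfst (a : α) : ∃ b, (a, b) ∈ J' := by
    obtain ⟨⟨c, b⟩, hcb, hc⟩ := hJ₁.symm ▸ mem_univ (π a)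
    exact ⟨b, show (π a, b) ∈ J from hc ▸ hcb⟩
  choose b hb using hfst
  have hsnd : Prod.snd '' J' = univ := by
    refine hS _ ⟨b x, _, hb x, rfl⟩ (isClosedMap_snd_of_compactSpace _ hJ'closed) ?_
    rintro _ ⟨p, hp, rfl⟩
    exact ⟨_, hJ'maps hp, rfl⟩
  have hjoin : IsJoining Tα S J' :=
    ⟨⟨_, hb x⟩, hJ'closed, hJ'maps, eq_univ_of_forall fun a => ⟨_, hb a, rfl⟩, hsnd⟩
  exact ((hd J' hjoin).symm ▸ mem_univ (x, y) : (x, y) ∈ J')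

theorem areDisjoint_of_dense_iUnion_range {ι : Type*} {α : ι → Type*}
    [∀ i, TopologicalSpace (α i)] [∀ i, CompactSpace (α i)] {T : ∀ i, α i → α i}
    (hd : ∀ i, AreDisjoint (T i) S) (hS : IsMinimalSystem S) {π : ∀ i, α i → γ}
    (hπ : ∀ i, Continuous (π i)) (hπR : ∀ i, Semiconj (π i) (T i) R)
    (hdense : Dense (⋃ i, range (π i))) : AreDisjoint R S := by
  rintro J ⟨-, hJ, hJR, hJ₁, -⟩
  have hsub : (⋃ i, range (π i)) ×ˢ (univ : Set β) ⊆ J := by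
    rw [iUnion_prod_const]
    exact iUnion_subset fun i => (hd i).range_prod_univ_subset hS (hπ i) (hπR i) hJ hJR hJ₁
  simpa [closure_prod_eq, hdense.closure_eq] using hJ.closure_subset_iff.2 hsub

theorem DisjointFromAllMinimal.of_dense_iUnion_range {ι : Type*} {α : ι → Type*}
    [∀ i, TopologicalSpace (α i)] [∀ i, CompactSpace (α i)] {T : ∀ i, α i → α i}
    (hd : ∀ i, DisjointFromAllMinimal (T i)) {π : ∀ i, α i → γ}
    (hπ : ∀ i, Continuous (π i)) (hπR : ∀ i, Semiconj (π i) (T i) R)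
    (hdense : Dense (⋃ i, range (π i))) : DisjointFromAllMinimal R :=
  fun β _ _ S hSc hSs hS =>
    areDisjoint_of_dense_iUnion_range (fun i => hd i β _ ‹_› S hSc hSs hS) hS hπ hπR hdense

end Joinings

section Hyperspace

attribute [local instance] TopologicalSpace.vietoris

open NonemptyCompacts

variable {X : Type*} [TopologicalSpace X]

theorem IsTransitive.of_coe_semiconj {γ : Type*} [TopologicalSpace γ] {R : γ → γ} {T : X → X}
    {p : γ → NonemptyCompacts X} (hp : Continuous p) (hpR : ∀ c, (p (R c) : Set X) = T '' p c)
    (hp_singleton : ∀ x, ∃ c, p c = {x}) (h : IsTransitive R) : IsTransitive T := by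
  intro U V hU hUne hV hVne
  have hsubsets {W : Set X} (hW : IsOpen W) (hWne : W.Nonempty) :
      IsOpen (p ⁻¹' {K | ↑K ⊆ W}) ∧ (p ⁻¹' {K | ↑K ⊆ W}).Nonempty := by
    obtain ⟨x, hx⟩ := hWne
    obtain ⟨c, hc⟩ := hp_singleton x
    exact ⟨(isOpen_subsets_of_isOpen hW).preimage hp, c, by simp [hc, hx]⟩
  refine (h _ _ (hsubsets hU hUne).1 (hsubsets hU hUne).2 (hsubsets hV hVne).1
    (hsubsets hV hVne).2).mono ?_
  rintro n ⟨c, hcU, hcV⟩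
  have hiter : (p (R^[n] c) : Set X) = T^[n] '' p c := by
    rw [image_iterate_eq]
    exact (Semiconj.iterate_right (f := fun c => (p c : Set X)) hpR n) c
  obtain ⟨x, hx⟩ := (p c).nonempty
  exact ⟨x, hcU hx, hcV (hiter ▸ mem_image_of_mem _ hx)⟩

variable (T : X → X) (hT : Continuous T)

theorem IsWeaklyMixing.of_TK (h : IsWeaklyMixing (TK T hT)) : IsWeaklyMixing T := by
  refine IsTransitive.of_coe_semiconj (p := fun c => c.1 ×ˢ c.2)
    continuous_prod (fun c => ?_) (fun x => ⟨({x.1}, {x.2}), ?_⟩) h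
  · simp [TK, prod_image_image_eq]; rfl
  · ext; simp

theorem _root_.TopologicalSpace.NonemptyCompacts.isClosed_setOf_mem [T2Space X] :
    IsClosed {p : X × NonemptyCompacts X | p.1 ∈ (p.2 : Set X)} := by
  rw [← isOpen_compl_iff]
  convert (isOpen_setOfPred_disjoint_coe (α := X)).preimage
    ((continuous_singleton.comp continuous_fst).prodMk continuous_snd) using 1
  ext
  simp

theorem AreDisjoint.of_TK [T2Space X] [CompactSpace X] {β : Type*} [TopologicalSpace β]
    {S : β → β} (hd : AreDisjoint (TK T hT) S) : AreDisjoint T S := by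
  rintro J ⟨⟨⟨x₀, y₀⟩, h₀⟩, hJ, hJmaps, hJ₁, hJ₂⟩
  set J' : Set (NonemptyCompacts X × β) := {q | ∃ x ∈ (q.1 : Set X), (x, q.2) ∈ J}
  have hJ'closed : IsClosed J' := by
    have hJ' : J' = Prod.snd '' ({r | r.1 ∈ (r.2.1 : Set X)} ∩ {r | (r.1, r.2.2) ∈ J}) := by
      ext
      simp [J']
    rw [hJ']
    refine isClosedMap_snd_of_compactSpace _ (IsClosed.inter ?_ ?_)
    · exact isClosed_setOf_mem.preimage
        (continuous_fst.prodMk (continuous_fst.comp continuous_snd))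
    · exact hJ.preimage (continuous_fst.prodMk (continuous_snd.comp continuous_snd))
  have hjoin : IsJoining (TK T hT) S J' := by
    refine ⟨⟨({x₀}, y₀), x₀, rfl, h₀⟩, hJ'closed, ?_, ?_, ?_⟩
    · rintro ⟨K, y⟩ ⟨x, hx, hxy⟩
      exact ⟨T x, mem_image_of_mem T hx, hJmaps hxy⟩
    · refine eq_univ_of_forall fun K => ?_
      obtain ⟨x, hx⟩ := K.nonempty
      obtain ⟨⟨x', y⟩, hxy, hx'⟩ := hJ₁.symm ▸ mem_univ x
      exact ⟨(K, y), ⟨x, hx, hx' ▸ hxy⟩, rfl⟩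
    · refine eq_univ_of_forall fun y => ?_
      obtain ⟨⟨x, y'⟩, hxy, hy'⟩ := hJ₂.symm ▸ mem_univ y
      exact ⟨({x}, y), ⟨x, rfl, hy' ▸ hxy⟩, rfl⟩
  refine eq_univ_of_forall fun ⟨x, y⟩ => ?_
  obtain ⟨x', hx', hxy⟩ : ({x}, y) ∈ J' := (hd J' hjoin).symm ▸ mem_univ _
  obtain rfl : x' = x := hx'
  exact hxy

theorem DisjointFromAllMinimal.of_TK [T2Space X] [CompactSpace X]
    (hd : DisjointFromAllMinimal (TK T hT)) : DisjointFromAllMinimal T :=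
  fun β _ _ S hSc hSs hS => (hd β _ ‹_› S hSc hSs hS).of_TK T hT

def _root_.TopologicalSpace.NonemptyCompacts.ofRange {ι : Type*} [Finite ι] [Nonempty ι]
    (x : ι → X) : NonemptyCompacts X :=
  ⟨⟨range x, (finite_range x).isCompact⟩, range_nonempty x⟩

theorem _root_.TopologicalSpace.NonemptyCompacts.continuous_ofRange {ι : Type*} [Finite ι]
    [Nonempty ι] : Continuous (ofRange : (ι → X) → NonemptyCompacts X) :=
  isEmbedding_coe.continuous_iff.2 vietoris.continuous_range_of_finite

theorem ofRange_comp_eq_TK {ι : Type*} [Finite ι] [Nonempty ι] (x : ι → X) :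
    ofRange (T ∘ x) = TK T hT (ofRange x) :=
  NonemptyCompacts.ext (range_comp T x)

theorem _root_.TopologicalSpace.NonemptyCompacts.dense_iUnion_range_ofRange :
    Dense (⋃ n : ℕ, range (ofRange : (Fin (n + 1) → X) → NonemptyCompacts X)) := by
  refine dense_setOfPred_finite.mono fun K (hK : (K : Set X).Finite) => ?_
  obtain ⟨n, x, hx⟩ := hK.fin_embedding
  obtain ⟨m, rfl⟩ : ∃ m, n = m + 1 :=
    Nat.exists_eq_succ_of_ne_zero (by rintro rfl; simpa [← hx] using K.nonempty)
  exact mem_iUnion.2 ⟨m, x, NonemptyCompacts.ext hx⟩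

end Hyperspace

section EmpiricalMeasures

variable {X : Type*} [MeasurableSpace X]

/-- `(1 / card ι) • ∑ i, dirac (x i)`, written as the push-forward of the uniform distribution. -/
def empiricalMeasure {ι : Type*} [Fintype ι] [Nonempty ι] [MeasurableSpace ι]
    [DiscreteMeasurableSpace ι] (x : ι → X) : ProbabilityMeasure X :=
  ⟨(PMF.uniformOfFintype ι).toMeasure.map x,
    Measure.isProbabilityMeasure_map (Measurable.of_discrete (f := x)).aemeasurable⟩

variable {ι : Type*} [Fintype ι] [Nonempty ι] [MeasurableSpace ι] [DiscreteMeasurableSpace ι]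

theorem coe_empiricalMeasure (x : ι → X) :
    (empiricalMeasure x : Measure X) = (PMF.uniformOfFintype ι).toMeasure.map x :=
  rfl

theorem integral_empiricalMeasure (x : ι → X) {f : X → ℝ} (hf : Measurable f) :
    ∫ a, f a ∂(empiricalMeasure x : Measure X) = (Fintype.card ι : ℝ)⁻¹ * ∑ i, f (x i) := by
  rw [coe_empiricalMeasure,
    integral_map Measurable.of_discrete.aemeasurable hf.aestronglyMeasurable,
    integral_fintype .of_finite]
  simp only [Measure.real, PMF.toMeasure_apply_singleton _ _ (.of_discrete),
    PMF.uniformOfFintype_apply, Finset.mul_sum, smul_eq_mul, ENNReal.toReal_inv,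
    ENNReal.toReal_natCast]

theorem continuous_empiricalMeasure [TopologicalSpace X] [OpensMeasurableSpace X] :
    Continuous (empiricalMeasure : (ι → X) → ProbabilityMeasure X) := by
  refine ProbabilityMeasure.continuous_iff_forall_continuous_integral.2 fun f => ?_
  simp_rw [integral_empiricalMeasure _ f.continuous.measurable]
  fun_prop

theorem empiricalMeasure_comp_eq_TM [TopologicalSpace X] [BorelSpace X] {T : X → X}
    (hT : Continuous T) (x : ι → X) :
    empiricalMeasure (T ∘ x) = TM T hT (empiricalMeasure x) := by
  ext1
  rw [TM, ProbabilityMeasure.toMeasure_map, coe_empiricalMeasure, coe_empiricalMeasure,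
    Measure.map_map hT.measurable Measurable.of_discrete]

end EmpiricalMeasures

section Density

open ProbabilityTheory Filter
open scoped BoundedContinuousFunction

variable {X : Type*} [MeasurableSpace X] [TopologicalSpace X] [OpensMeasurableSpace X]

theorem ae_tendsto_average_infinitePi (μ : Measure X) [IsProbabilityMeasure μ] (f : X →ᵇ ℝ) :
    ∀ᵐ ω ∂(Measure.infinitePi fun _ : ℕ => μ),
      Tendsto (fun n : ℕ => (∑ i ∈ Finset.range n, f (ω i)) / n) atTop (𝓝 (∫ a, f a ∂μ)) := by
  set P := Measure.infinitePi fun _ : ℕ => μ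
  have hlaw (i : ℕ) : HasLaw (fun ω : ℕ → X => ω i) μ P :=
    (measurePreserving_eval_infinitePi (fun _ => μ) i).hasLaw
  have hlawf (i : ℕ) : HasLaw (fun ω : ℕ → X => f (ω i)) (μ.map f) P :=
    (HasLaw.mk f.continuous.aemeasurable rfl).comp (hlaw i)
  have hint : Integrable (fun ω : ℕ → X => f (ω 0)) P :=
    (measurePreserving_eval_infinitePi (fun _ => μ) 0).integrable_comp_of_integrable
      (f.integrable μ)
  have hindep : Pairwise fun i j => IndepFun (fun ω : ℕ → X => f (ω i)) (fun ω => f (ω j)) P :=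
    fun i j hij =>
      (iIndepFun_infinitePi (P := fun _ => μ) fun _ => f.continuous.measurable).indepFun hij
  have hident (i : ℕ) : IdentDistrib (fun ω : ℕ → X => f (ω i)) (fun ω => f (ω 0)) P P :=
    (hlawf i).identDistrib (hlawf 0)
  have hmean : ∫ ω, f (ω 0) ∂P = ∫ a, f a ∂μ :=
    (hlaw 0).integral_comp f.continuous.aestronglyMeasurable
  exact hmean ▸ strong_law_ae_real (fun i (ω : ℕ → X) => f (ω i)) hint hindep hident

theorem exists_empiricalMeasure_dist_integral_lt (μ : ProbabilityMeasure X)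
    (I : Finset (X →ᵇ ℝ)) {ε : ℝ} (hε : 0 < ε) :
    ∃ n, ∃ x : Fin (n + 1) → X, ∀ f ∈ I,
      dist (∫ a, f a ∂(empiricalMeasure x : Measure X)) (∫ a, f a ∂(μ : Measure X)) < ε := by
  obtain ⟨ω, hω⟩ := ((eventually_all_finset I).2 fun f _ =>
    ae_tendsto_average_infinitePi (μ : Measure X) f).exists
  obtain ⟨n, hn⟩ := ((eventually_all_finset I).2 fun f hf =>
    ((tendsto_add_atTop_iff_nat 1).2 (hω f hf)).eventually (Metric.ball_mem_nhds _ hε)).exists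
  refine ⟨n, fun i => ω i, fun f hf => ?_⟩
  rw [integral_empiricalMeasure _ f.continuous.measurable, Fintype.card_fin,
    Fin.sum_univ_eq_sum_range (fun i => f (ω i)), inv_mul_eq_div]
  exact_mod_cast hn f hf

theorem dense_iUnion_range_empiricalMeasure :
    Dense (⋃ n : ℕ, range (empiricalMeasure : (Fin (n + 1) → X) → ProbabilityMeasure X)) := by
  classical
  intro μ
  choose n x hx using fun p : Finset (X →ᵇ ℝ) × ℕ =>
    exists_empiricalMeasure_dist_integral_lt μ p.1 (Nat.one_div_pos_of_nat (n := p.2))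
  refine mem_closure_of_tendsto (b := atTop) (f := fun p => empiricalMeasure (x p)) ?_
    (.of_forall fun p => mem_iUnion.2 ⟨n p, x p, rfl⟩)
  refine ProbabilityMeasure.tendsto_iff_forall_integral_tendsto.2 fun f =>
    Metric.tendsto_atTop.2 fun ε hε => ?_
  obtain ⟨k, hk⟩ := exists_nat_one_div_lt hε
  refine ⟨({f}, k), fun p hp => (hx p f (hp.1 (Finset.mem_singleton_self f))).trans ?_⟩
  calc 1 / ((p.2 : ℝ) + 1) ≤ 1 / ((k : ℝ) + 1) := by gcongr; exact_mod_cast hp.2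
    _ < ε := hk

end Density

theorem disjointness_and_induced_systems_general {X : Type*}
    [MetricSpace X] [CompactSpace X] [MeasurableSpace X] [BorelSpace X]
    (T : X → X) (hT : Continuous T) :
    ((IsWeaklyMixing (TK T hT) ∧ DisjointFromAllMinimal (TK T hT)) →
      (IsWeaklyMixing T ∧ DisjointFromAllMinimal T)) ∧
    ((∀ n : ℕ, 0 < n → DisjointFromAllMinimal (fun x : Fin n → X => T ∘ x)) →
      (DisjointFromAllMinimal (TK T hT) ∧ DisjointFromAllMinimal (TM T hT))) := by
  refine ⟨fun ⟨hwm, hd⟩ => ⟨hwm.of_TK T hT, hd.of_TK T hT⟩, fun h => ?_⟩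
  have hpow (n : ℕ) : DisjointFromAllMinimal fun x : Fin (n + 1) → X => T ∘ x :=
    h (n + 1) n.succ_pos
  exact ⟨.of_dense_iUnion_range hpow (fun _ => NonemptyCompacts.continuous_ofRange)
      (fun _ => ofRange_comp_eq_TK T hT) NonemptyCompacts.dense_iUnion_range_ofRange,
    .of_dense_iUnion_range hpow (fun _ => continuous_empiricalMeasure)
      (fun _ => empiricalMeasure_comp_eq_TM hT) dense_iUnion_range_empiricalMeasure⟩

theorem disjointness_and_induced_systems {X : Type*}
    [MetricSpace X] [CompactSpace X] [MeasurableSpace X] [BorelSpace X]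
    (T : X → X) (hT : Continuous T) (hTs : Surjective T) :
    ((IsWeaklyMixing (TK T hT) ∧ DisjointFromAllMinimal (TK T hT)) →
      (IsWeaklyMixing T ∧ DisjointFromAllMinimal T)) ∧
    ((∀ n : ℕ, 0 < n → DisjointFromAllMinimal (fun x : Fin n → X => T ∘ x)) →
      (DisjointFromAllMinimal (TK T hT) ∧ DisjointFromAllMinimal (TM T hT))) :=
  disjointness_and_induced_systems_general T hT

end Paper
end
end
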